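/- Let W_0 = (p_{ab}) ∈ B^γ be a block graphon, let H be a finite simple graph, and let t satisfy t(H,W_0) ≤ t ≤ t_max, where t_max = sup{t(H,g) : g ∈ W_Ω}. If f minimizes I_{W_0} over the set {g ∈ B^γ : t(H,g) ≥ t}, then t(H,f) = t, W_0 ≤ f pointwise, and f = W_0 on every irrelevant block of W_0. -/

import Mathlib

open MeasureTheory Set Filter
open scoped ENNReal NNReal

noncomputable section

namespace GraphonLDP

/-- The unit square `[0,1]² ⊆ ℝ²`. -/
def unitSq : Set (ℝ × ℝ) := Set.Icc (0:ℝ) 1 ×ˢ Set.Icc (0:ℝ) 1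

/-- A graphon: a measurable, symmetric function with values in `[0,1]`. -/
def IsGraphon (f : ℝ → ℝ → ℝ) : Prop :=
  Measurable (Function.uncurry f) ∧ (∀ x y, f x y ∈ Set.Icc (0:ℝ) 1) ∧ ∀ x y, f x y = f y x

open Classical in
/-- The pointwise relative entropy `h_p(u)`, valued in `[0,∞]`
(with `h_0(0) = h_1(1) = 0`, `h_0(u) = ∞` for `u ≠ 0`, `h_1(u) = ∞` for `u ≠ 1`,
and the convention `0 log 0 = 0`, which is automatic since `Real.log 0 = 0`). -/
def relEnt (p u : ℝ) : ℝ≥0∞ :=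
  if p = 0 then (if u = 0 then 0 else ⊤)
  else if p = 1 then (if u = 1 then 0 else ⊤)
  else ENNReal.ofReal (u * Real.log (u / p) + (1 - u) * Real.log ((1 - u) / (1 - p)))

/-- The relative entropy functional `I_{W₀}(f)`, valued in `[0,∞]`. -/
def Ient (W₀ f : ℝ → ℝ → ℝ) : ℝ≥0∞ :=
  (1 / 2) * ∫⁻ q in unitSq, relEnt (W₀ q.1 q.2) (f q.1 q.2)

/-- `Ω = {(x,y) ∈ [0,1]² : 0 < W₀(x,y) < 1}`. -/
def OmegaSet (W₀ : ℝ → ℝ → ℝ) : Set (ℝ × ℝ) :=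
  {q | q ∈ unitSq ∧ W₀ q.1 q.2 ∈ Set.Ioo (0:ℝ) 1}

/-- `f ∈ W_Ω`: `f` is a graphon agreeing with `W₀` a.e. on `[0,1]² \ Ω`. -/
def MemWOmega (W₀ f : ℝ → ℝ → ℝ) : Prop :=
  IsGraphon f ∧
    ∀ᵐ q ∂(volume.restrict (unitSq \ OmegaSet W₀)), f q.1 q.2 = W₀ q.1 q.2

/-- The cut distance `d_□(f,g)`. -/
def cutDist (f g : ℝ → ℝ → ℝ) : ℝ :=
  ⨆ p : {S : Set ℝ // MeasurableSet S ∧ S ⊆ Set.Icc (0:ℝ) 1} ×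
        {T : Set ℝ // MeasurableSet T ∧ T ⊆ Set.Icc (0:ℝ) 1},
    |∫ q in ((p.1 : Set ℝ) ×ˢ (p.2 : Set ℝ)), (f q.1 q.2 - g q.1 q.2)|

/-- The set of values of `W₀` on the unit square. -/
def imageVals (W₀ : ℝ → ℝ → ℝ) : Set ℝ := {w : ℝ | ∃ q ∈ unitSq, W₀ q.1 q.2 = w}

/-- Real-valued relative entropy `h_p(u)` for `p ∈ (0,1)`. -/
def hRel (p u : ℝ) : ℝ :=
  u * Real.log (u / p) + (1 - u) * Real.log ((1 - u) / (1 - p))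

/-- `ψ_p(x) = h_p(x^{1/d})`. -/
def psi (d : ℕ) (p : ℝ) : ℝ → ℝ := fun x => hRel p (x ^ ((d : ℝ)⁻¹))

/-- The convex minorant on `[0,1]`: pointwise supremum of affine minorants. -/
def convexMinorant (F : ℝ → ℝ) (x : ℝ) : ℝ :=
  sSup {y : ℝ | ∃ a b : ℝ, (∀ z ∈ Set.Icc (0:ℝ) 1, a * z + b ≤ F z) ∧ y = a * x + b}

/-- `A⁺_ε(f,c) = {(x,y) ∈ [0,1]² : f(x,y) − c ≥ ε}`. -/
def Aplus (f : ℝ → ℝ → ℝ) (c ε : ℝ) : Set (ℝ × ℝ) :=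
  {q | q ∈ unitSq ∧ ε ≤ f q.1 q.2 - c}

/-- `A⁻_ε(f,c) = {(x,y) ∈ [0,1]² : c − f(x,y) ≥ ε}`. -/
def Aminus (f : ℝ → ℝ → ℝ) (c ε : ℝ) : Set (ℝ × ℝ) :=
  {q | q ∈ unitSq ∧ ε ≤ c - f q.1 q.2}

/-- Partial sums `γ_1 + ⋯ + γ_n`. -/
def cumSum {m : ℕ} (γ : Fin m → ℝ) (n : ℕ) : ℝ :=
  ∑ i : Fin m, if (i : ℕ) < n then γ i else 0

/-- The interval `I_j` of the block structure: `I_1 = [0,γ_1]`,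
`I_j = (γ_1+⋯+γ_{j-1}, γ_1+⋯+γ_j]` for `j ≥ 2`. -/
def blockI {m : ℕ} (γ : Fin m → ℝ) (j : Fin m) : Set ℝ :=
  if (j : ℕ) = 0 then Set.Icc 0 (cumSum γ 1)
  else Set.Ioc (cumSum γ (j : ℕ)) (cumSum γ ((j : ℕ) + 1))

/-- `γ` is a vector of positive block widths summing to `1`. -/
def GoodWidths {m : ℕ} (γ : Fin m → ℝ) : Prop :=
  (∀ i, 0 < γ i) ∧ ∑ i, γ i = 1

/-- `f` is the block graphon in `B^γ` with matrix `P`. -/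
def IsBlockGraphon {m : ℕ} (γ : Fin m → ℝ) (P : Fin m → Fin m → ℝ) (f : ℝ → ℝ → ℝ) : Prop :=
  (∀ i j, P i j ∈ Set.Icc (0:ℝ) 1) ∧ (∀ i j, P i j = P j i) ∧
    ∀ i j, ∀ x ∈ blockI γ i, ∀ y ∈ blockI γ j, f x y = P i j

/-- The homomorphism density `t(H,f)`. -/
def homDensity {v : ℕ} (H : SimpleGraph (Fin v)) [DecidableRel H.Adj] (f : ℝ → ℝ → ℝ) : ℝ :=
  ∫ x in Set.univ.pi (fun _ : Fin v => Set.Icc (0:ℝ) 1),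
    ∏ e ∈ Finset.univ.filter (fun e : Fin v × Fin v => e.1 < e.2 ∧ H.Adj e.1 e.2),
      f (x e.1) (x e.2)

/-- `‖g‖_d = (∫_{[0,1]²} g^d)^{1/d}`. -/
def normD (d : ℕ) (g : ℝ → ℝ → ℝ) : ℝ :=
  (∫ q in unitSq, (g q.1 q.2) ^ d) ^ ((d : ℝ)⁻¹)

/-- The rescaled restriction `f_{ij}` of `f` to the block `I_i × I_j`. -/
def fBlock {m : ℕ} (γ : Fin m → ℝ) (f : ℝ → ℝ → ℝ) (i j : Fin m) : ℝ → ℝ → ℝ :=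
  fun x y => f (cumSum γ (i : ℕ) + x * γ i) (cumSum γ (j : ℕ) + y * γ j)

/-- `K_{W₀}(f,a)`. -/
def Kfun (W₀ f a : ℝ → ℝ → ℝ) : ℝ :=
  ∫ q in unitSq,
    (a q.1 q.2 * f q.1 q.2 -
      Real.log (W₀ q.1 q.2 * Real.exp (a q.1 q.2) + 1 - W₀ q.1 q.2))

/-- Symmetric functions in `L²([0,1]²)`. -/
def SymL2 (a : ℝ → ℝ → ℝ) : Prop :=
  Measurable (Function.uncurry a) ∧
    (∀ᵐ q ∂(volume.restrict unitSq), a q.1 q.2 = a q.2 q.1) ∧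
    IntegrableOn (fun q : ℝ × ℝ => (a q.1 q.2) ^ 2) unitSq

/-- The matrix `P` with the entries `(a,b)` and `(b,a)` replaced by `q`. -/
def modMat {m : ℕ} (P : Fin m → Fin m → ℝ) (a b : Fin m) (q : ℝ) :
    Fin m → Fin m → ℝ :=
  fun i j => if (i = a ∧ j = b) ∨ (i = b ∧ j = a) then q else P i j

/-- The block `I_a × I_b` of the block graphon `W₀ = (P i j)` is relevant:
`P a b > 0` and replacing the entries `P a b = P b a` by any strictly smaller
(nonnegative) value strictly decreases the homomorphism density of `H`. -/
def RelevantBlock {v m : ℕ} (H : SimpleGraph (Fin v)) [DecidableRel H.Adj]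
    (γ : Fin m → ℝ) (P : Fin m → Fin m → ℝ) (W₀ : ℝ → ℝ → ℝ) (a b : Fin m) : Prop :=
  0 < P a b ∧ ∀ q : ℝ, 0 ≤ q → q < P a b →
    ∀ g : ℝ → ℝ → ℝ, IsGraphon g → IsBlockGraphon γ (modMat P a b q) g →
      homDensity H g < homDensity H W₀

open Classical in
/-- `g^{+η}`: equal to `min (g + η) 1` on `Ω` and to `g` off `Ω`. -/
def gplus (W₀ g : ℝ → ℝ → ℝ) (η : ℝ) : ℝ → ℝ → ℝ := fun x y =>
  if (x, y) ∈ OmegaSet W₀ then min (g x y + η) 1 else g x y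

open Classical in
/-- The graphon `f_{a,b,c}^γ`: `a` on `[0,γ]²`, `c` on `(γ,1]²`, `b` elsewhere. -/
def fabc (γ a b c : ℝ) : ℝ → ℝ → ℝ := fun x y =>
  if x ∈ Set.Icc (0:ℝ) γ ∧ y ∈ Set.Icc (0:ℝ) γ then a
  else if x ∈ Set.Ioc γ 1 ∧ y ∈ Set.Ioc γ 1 then c
  else b

/-- Membership in the two-block family `B^{(γ,1-γ)} = {f_{a,b,c}^γ : a,b,c ∈ [0,1]}`. -/
def memB2 (γ : ℝ) (f : ℝ → ℝ → ℝ) : Prop :=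
  ∃ a b c : ℝ, a ∈ Set.Icc (0:ℝ) 1 ∧ b ∈ Set.Icc (0:ℝ) 1 ∧ c ∈ Set.Icc (0:ℝ) 1 ∧
    f = fabc γ a b c

/-- The diagonal blocks `[0,γ]² ∪ (γ,1]²`. -/
def diagBlocks (γ : ℝ) : Set (ℝ × ℝ) :=
  (Set.Icc (0:ℝ) γ ×ˢ Set.Icc (0:ℝ) γ) ∪ (Set.Ioc γ 1 ×ˢ Set.Ioc γ 1)

/-- The operator norm `‖f‖_op = sup {‖T_f u‖₂ : ‖u‖₂ ≤ 1}` of the kernel operator `T_f`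
on `L²([0,1])`. -/
def opNorm (f : ℝ → ℝ → ℝ) : ℝ :=
  sSup {c : ℝ | ∃ u : ℝ → ℝ, Measurable u ∧
    eLpNorm u 2 (volume.restrict (Set.Icc (0:ℝ) 1)) ≤ 1 ∧
    c = (∫ x in Set.Icc (0:ℝ) 1, (∫ y in Set.Icc (0:ℝ) 1, f x y * u y) ^ 2) ^ ((2:ℝ)⁻¹)}

section Aux


/-- auxiliary smooth version of `hRel`. -/
def entF (p u : ℝ) : ℝ :=
  u * Real.log u + (1 - u) * Real.log (1 - u) - u * Real.log p - (1 - u) * Real.log (1 - p)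

lemma entF_eq_hRel {p : ℝ} (hp : p ∈ Set.Ioo (0:ℝ) 1) {u : ℝ} (hu : u ∈ Set.Icc (0:ℝ) 1) :
    hRel p u = entF p u := by
  rcases eq_or_lt_of_le hu.1 with h0 | h0
  · simp [hRel, entF, ← h0, Real.log_inv, one_div]
  rcases eq_or_lt_of_le hu.2 with h1 | h1
  · simp [hRel, entF, h1, Real.log_inv, one_div]
  have hu0 : u ≠ 0 := ne_of_gt h0
  have hu1 : (1:ℝ) - u ≠ 0 := by linarith
  have hp0 : p ≠ 0 := ne_of_gt hp.1
  have hp1 : (1:ℝ) - p ≠ 0 := by linarith [hp.2]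
  rw [hRel, entF, Real.log_div hu0 hp0, Real.log_div hu1 hp1]
  ring

lemma continuous_entF (p : ℝ) : Continuous (entF p) := by
  unfold entF
  have h1 : Continuous fun u : ℝ => u * Real.log u := Real.continuous_mul_log
  have h2 : Continuous fun u : ℝ => (1 - u) * Real.log (1 - u) :=
    Real.continuous_mul_log.comp (continuous_const.sub continuous_id)
  continuity

lemma hasDerivAt_entF {p u : ℝ} (hu : u ∈ Set.Ioo (0:ℝ) 1) :
    HasDerivAt (entF p) (Real.log u - Real.log (1 - u) - Real.log p + Real.log (1 - p)) u := by
  have hu0 : u ≠ 0 := ne_of_gt hu.1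
  have hu1 : (1:ℝ) - u ≠ 0 := by have := hu.2; intro h; linarith [h]
  have d1 : HasDerivAt (fun x : ℝ => x * Real.log x) (Real.log u + 1) u :=
    Real.hasDerivAt_mul_log hu0
  have d2' : HasDerivAt (fun x : ℝ => (1:ℝ) - x) (-1) u := by
    simpa using (hasDerivAt_id u).const_sub 1
  have d2 : HasDerivAt (fun x : ℝ => (1 - x) * Real.log (1 - x))
      ((Real.log (1 - u) + 1) * (-1)) u :=
    (Real.hasDerivAt_mul_log hu1).comp u d2'
  have d3 : HasDerivAt (fun x : ℝ => x * Real.log p) (Real.log p) u := by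
    simpa using (hasDerivAt_id u).mul_const (Real.log p)
  have d4 : HasDerivAt (fun x : ℝ => (1 - x) * Real.log (1 - p)) (-Real.log (1 - p)) u := by
    simpa using d2'.mul_const (Real.log (1 - p))
  have := ((d1.add d2).sub d3).sub d4
  refine this.congr_deriv ?_
  ring

lemma strictMonoOn_entF {p : ℝ} (hp : p ∈ Set.Ioo (0:ℝ) 1) :
    StrictMonoOn (entF p) (Set.Icc p 1) := by
  apply strictMonoOn_of_deriv_pos (convex_Icc p 1) (continuous_entF p).continuousOn
  intro u hu
  rw [interior_Icc] at hu
  have hu' : u ∈ Set.Ioo (0:ℝ) 1 := ⟨lt_trans hp.1 hu.1, hu.2⟩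
  rw [(hasDerivAt_entF hu').deriv]
  have l1 : Real.log p < Real.log u := Real.log_lt_log hp.1 hu.1
  have l2 : Real.log (1 - u) < Real.log (1 - p) :=
    Real.log_lt_log (by linarith [hu'.2]) (by linarith [hu.1])
  linarith

lemma strictAntiOn_entF {p : ℝ} (hp : p ∈ Set.Ioo (0:ℝ) 1) :
    StrictAntiOn (entF p) (Set.Icc 0 p) := by
  apply strictAntiOn_of_deriv_neg (convex_Icc 0 p) (continuous_entF p).continuousOn
  intro u hu
  rw [interior_Icc] at hu
  have hu' : u ∈ Set.Ioo (0:ℝ) 1 := ⟨hu.1, lt_trans hu.2 hp.2⟩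
  rw [(hasDerivAt_entF hu').deriv]
  have l1 : Real.log u < Real.log p := Real.log_lt_log hu.1 hu.2
  have l2 : Real.log (1 - p) < Real.log (1 - u) :=
    Real.log_lt_log (by linarith [hp.2]) (by linarith [hu.2])
  linarith

lemma entF_self (p : ℝ) : entF p p = 0 := by unfold entF; ring

lemma hRel_self {p : ℝ} (hp : p ∈ Set.Ioo (0:ℝ) 1) : hRel p p = 0 := by
  rw [entF_eq_hRel hp ⟨le_of_lt hp.1, le_of_lt hp.2⟩, entF_self]

lemma hRel_pos {p : ℝ} (hp : p ∈ Set.Ioo (0:ℝ) 1) {u : ℝ} (hu : u ∈ Set.Icc (0:ℝ) 1)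
    (hne : u ≠ p) : 0 < hRel p u := by
  rw [entF_eq_hRel hp hu, ← entF_self p]
  rcases lt_or_gt_of_ne hne with h | h
  · exact strictAntiOn_entF hp ⟨hu.1, le_of_lt h⟩ ⟨le_of_lt hp.1, le_refl p⟩ h
  · exact strictMonoOn_entF hp ⟨le_refl p, le_of_lt hp.2⟩ ⟨le_of_lt h, hu.2⟩ h

lemma hRel_nonneg {p : ℝ} (hp : p ∈ Set.Ioo (0:ℝ) 1) {u : ℝ} (hu : u ∈ Set.Icc (0:ℝ) 1) :
    0 ≤ hRel p u := by
  rcases eq_or_ne u p with h | h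
  · rw [h, hRel_self hp]
  · exact le_of_lt (hRel_pos hp hu h)

lemma hRel_lt {p u₁ u₂ : ℝ} (hp : p ∈ Set.Ioo (0:ℝ) 1) (h1 : p ≤ u₁) (h2 : u₁ < u₂)
    (h3 : u₂ ≤ 1) : hRel p u₁ < hRel p u₂ := by
  have m1 : u₁ ∈ Set.Icc p 1 := ⟨h1, by linarith⟩
  have m2 : u₂ ∈ Set.Icc p 1 := ⟨by linarith, h3⟩
  rw [entF_eq_hRel hp ⟨le_trans (le_of_lt hp.1) m1.1, m1.2⟩,
    entF_eq_hRel hp ⟨le_trans (le_of_lt hp.1) m2.1, m2.2⟩]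
  exact strictMonoOn_entF hp m1 m2 h2



lemma relEnt_of_mem {p : ℝ} (hp : p ∈ Set.Ioo (0:ℝ) 1) (u : ℝ) :
    relEnt p u = ENNReal.ofReal (hRel p u) := by
  rw [relEnt, if_neg (ne_of_gt hp.1), if_neg (ne_of_lt hp.2)]; rfl

lemma relEnt_self {p : ℝ} (hp : p ∈ Set.Icc (0:ℝ) 1) : relEnt p p = 0 := by
  rcases eq_or_lt_of_le hp.1 with h0 | h0
  · simp [relEnt, ← h0]
  rcases eq_or_lt_of_le hp.2 with h1 | h1
  · simp [relEnt, h1, ne_of_gt h0]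
  · rw [relEnt_of_mem ⟨h0, h1⟩, hRel_self ⟨h0, h1⟩]; simp

lemma relEnt_pos {p : ℝ} (hp : p ∈ Set.Ioo (0:ℝ) 1) {u : ℝ} (hu : u ∈ Set.Icc (0:ℝ) 1)
    (hne : u ≠ p) : 0 < relEnt p u := by
  rw [relEnt_of_mem hp]
  simpa using (hRel_pos hp hu hne)

lemma relEnt_lt {p u₁ u₂ : ℝ} (hp : p ∈ Set.Ioo (0:ℝ) 1) (h1 : p ≤ u₁) (h2 : u₁ < u₂)
    (h3 : u₂ ≤ 1) : relEnt p u₁ < relEnt p u₂ := by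
  rw [relEnt_of_mem hp, relEnt_of_mem hp]
  rw [ENNReal.ofReal_lt_ofReal_iff]
  · exact hRel_lt hp h1 h2 h3
  · exact lt_of_le_of_lt (hRel_nonneg hp ⟨by linarith [hp.1], by linarith⟩)
      (hRel_lt hp h1 h2 h3)

lemma relEnt_max_le {p u : ℝ} (hp : p ∈ Set.Icc (0:ℝ) 1) (hu : u ∈ Set.Icc (0:ℝ) 1) :
    relEnt p (max u p) ≤ relEnt p u := by
  rcases le_or_gt p u with h | h
  · rw [max_eq_left h]
  · rw [max_eq_right (le_of_lt h), relEnt_self hp]; exact zero_le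

lemma relEnt_ne_top_cases {p u : ℝ} (h : relEnt p u ≠ ⊤) :
    (p = 0 → u = 0) ∧ (p = 1 → u = 1) := by
  constructor
  · intro hp; by_contra hne; rw [relEnt, if_pos hp, if_neg hne] at h; exact h rfl
  · intro hp; by_contra hne
    have hp0 : p ≠ 0 := by rw [hp]; norm_num
    rw [relEnt, if_neg hp0, if_pos hp, if_neg hne] at h; exact h rfl

lemma relEnt_eq_zero_iff {p : ℝ} (hp : p ∈ Set.Ioo (0:ℝ) 1) {u : ℝ}
    (hu : u ∈ Set.Icc (0:ℝ) 1) (h : relEnt p u = 0) : u = p := by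
  by_contra hne
  exact absurd h (pos_iff_ne_zero.mp (relEnt_pos hp hu hne))

/-- key ENNReal finite-sum comparison lemma -/
lemma sum_eq_of_le {ι : Type*} [Fintype ι] (c a b : ι → ℝ≥0∞) (hc0 : ∀ i, c i ≠ 0)
    (hab : ∀ i, b i ≤ a i) (hfin : ∑ i, c i * a i ≠ ⊤)
    (hle : ∑ i, c i * a i ≤ ∑ i, c i * b i) : ∀ i, a i = b i := by
  classical
  have hba : ∑ i, c i * b i ≤ ∑ i, c i * a i :=
    Finset.sum_le_sum fun i _ => mul_le_mul_right (hab i) _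
  have hsum : ∑ i, c i * a i = ∑ i, c i * b i := le_antisymm hle hba
  intro i
  rcases (hab i).lt_or_eq with hlt | heq
  · exfalso
    have hterm : c i * a i ≤ ∑ j, c j * a j :=
      Finset.single_le_sum (f := fun j => c j * a j) (fun j _ => zero_le) (Finset.mem_univ i)
    have hcane : c i * a i ≠ ⊤ := ne_top_of_le_ne_top hfin hterm
    have hca : c i ≠ ⊤ := fun h => hcane (by
      rw [ENNReal.mul_eq_top]; right
      refine ⟨h, ?_⟩
      intro ha0
      rw [ha0] at hlt; exact absurd hlt (by simp))
    have hstrict : c i * b i < c i * a i := by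
      rw [ENNReal.mul_lt_mul_iff_right (hc0 i) hca]; exact hlt
    have h1 : ∑ j, c j * b j = c i * b i + ∑ j ∈ Finset.univ.erase i, c j * b j :=
      (Finset.add_sum_erase _ _ (Finset.mem_univ i)).symm
    have h2 : ∑ j, c j * a j = c i * a i + ∑ j ∈ Finset.univ.erase i, c j * a j :=
      (Finset.add_sum_erase _ _ (Finset.mem_univ i)).symm
    have herase : ∑ j ∈ Finset.univ.erase i, c j * b j ≤ ∑ j ∈ Finset.univ.erase i, c j * a j :=
      Finset.sum_le_sum fun j _ => mul_le_mul_right (hab j) _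
    have heraseTop : ∑ j ∈ Finset.univ.erase i, c j * b j ≠ ⊤ := by
      refine ne_top_of_le_ne_top hfin (le_trans herase ?_)
      exact Finset.sum_le_sum_of_subset (Finset.subset_univ _)
    have : ∑ j, c j * b j < ∑ j, c j * a j := by
      rw [h1, h2]
      calc c i * b i + ∑ j ∈ Finset.univ.erase i, c j * b j
          < c i * a i + ∑ j ∈ Finset.univ.erase i, c j * b j := by
            exact ENNReal.add_lt_add_right heraseTop hstrict
        _ ≤ c i * a i + ∑ j ∈ Finset.univ.erase i, c j * a j := by
            exact add_le_add_right herase _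
    rw [hsum] at this; exact absurd this (lt_irrefl _)
  · exact heq.symm


section Blocks
variable {m : ℕ}

lemma cumSum_zero (γ : Fin m → ℝ) : cumSum γ 0 = 0 := by simp [cumSum]

lemma cumSum_succ (γ : Fin m → ℝ) (j : Fin m) :
    cumSum γ ((j : ℕ) + 1) = cumSum γ (j : ℕ) + γ j := by
  classical
  have key : ∀ i : Fin m, (if (i:ℕ) < (j:ℕ)+1 then γ i else 0)
      = (if (i:ℕ) < (j:ℕ) then γ i else 0) + (if i = j then γ i else 0) := by
    intro i
    rcases lt_trichotomy (i:ℕ) (j:ℕ) with h|h|h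
    · simp [h, Nat.lt_succ_of_lt h, Fin.ne_of_val_ne (ne_of_lt h)]
    · have hij : i = j := Fin.ext h
      simp [hij]
    · have h1 : ¬ (i:ℕ) < (j:ℕ)+1 := by omega
      have h2 : ¬ (i:ℕ) < (j:ℕ) := by omega
      have h3 : i ≠ j := Fin.ne_of_val_ne (by omega)
      rw [if_neg h1, if_neg h2, if_neg h3, add_zero]
  simp only [cumSum, key, Finset.sum_add_distrib]
  congr 1
  simp

lemma cumSum_mono {γ : Fin m → ℝ} (hγ : ∀ i, 0 < γ i) {n n' : ℕ} (h : n ≤ n') :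
    cumSum γ n ≤ cumSum γ n' := by
  refine Finset.sum_le_sum fun i _ => ?_
  by_cases hi : (i:ℕ) < n
  · rw [if_pos hi, if_pos (lt_of_lt_of_le hi h)]
  · rw [if_neg hi]
    split_ifs
    · exact (hγ i).le
    · exact le_refl 0

lemma cumSum_nonneg {γ : Fin m → ℝ} (hγ : ∀ i, 0 < γ i) (n : ℕ) : 0 ≤ cumSum γ n := by
  have := cumSum_mono hγ (Nat.zero_le n)
  rwa [cumSum_zero] at this

lemma cumSum_total {γ : Fin m → ℝ} (hγ : GoodWidths γ) {n : ℕ} (h : m ≤ n) :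
    cumSum γ n = 1 := by
  rw [← hγ.2]
  refine Finset.sum_congr rfl fun i _ => ?_
  rw [if_pos (lt_of_lt_of_le i.2 h)]

lemma cumSum_le_one {γ : Fin m → ℝ} (hγ : GoodWidths γ) (n : ℕ) : cumSum γ n ≤ 1 := by
  rcases le_or_gt m n with h | h
  · rw [cumSum_total hγ h]
  · rw [← cumSum_total hγ (le_refl m)]
    exact cumSum_mono hγ.1 h.le

lemma blockI_subset {γ : Fin m → ℝ} (hγ : GoodWidths γ) (j : Fin m) :
    blockI γ j ⊆ Set.Icc (0:ℝ) 1 := by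
  intro x hx
  rw [blockI] at hx
  split_ifs at hx with h
  · exact ⟨hx.1, le_trans hx.2 (cumSum_le_one hγ 1)⟩
  · exact ⟨le_trans (cumSum_nonneg hγ.1 _) hx.1.le, le_trans hx.2 (cumSum_le_one hγ _)⟩

lemma blockI_mem_le {γ : Fin m → ℝ} {j : Fin m} {x : ℝ} (hx : x ∈ blockI γ j) :
    x ≤ cumSum γ ((j:ℕ) + 1) := by
  rw [blockI] at hx
  split_ifs at hx with h
  · rw [h] at *; exact hx.2
  · exact hx.2

lemma blockI_disjoint {γ : Fin m → ℝ} (hγ : GoodWidths γ) :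
    Pairwise (Function.onFun Disjoint (blockI γ)) := by
  have key : ∀ i j : Fin m, (i:ℕ) < (j:ℕ) → Disjoint (blockI γ i) (blockI γ j) := by
    intro i j hij
    rw [Set.disjoint_left]
    intro x hxi hxj
    have h1 : x ≤ cumSum γ ((i:ℕ)+1) := blockI_mem_le hxi
    have h2 : cumSum γ (j:ℕ) < x := by
      rw [blockI, if_neg (by omega : ¬ (j:ℕ) = 0)] at hxj
      exact hxj.1
    have h3 : cumSum γ ((i:ℕ)+1) ≤ cumSum γ (j:ℕ) := cumSum_mono hγ.1 (by omega)
    linarith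
  intro i j hij
  rcases lt_or_gt_of_ne (fun h => hij (by exact_mod_cast Fin.ext (congrArg Fin.val h))) with h | h
  · exact key i j h
  · exact (key j i h).symm

lemma blockI_cover {γ : Fin m → ℝ} (hγ : GoodWidths γ) {x : ℝ}
    (hx : x ∈ Set.Icc (0:ℝ) 1) : ∃ j : Fin m, x ∈ blockI γ j := by
  classical
  have hm : 0 < m := by
    by_contra h
    have hm0 : m = 0 := by omega
    subst hm0
    have := hγ.2
    simp at this
  have hex : ∃ n : ℕ, x ≤ cumSum γ (n + 1) :=
    ⟨m - 1, by rw [cumSum_total hγ (by omega)]; exact hx.2⟩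
  let k := Nat.find hex
  have hk : x ≤ cumSum γ (k + 1) := Nat.find_spec hex
  have hkm : k < m := by
    by_contra h
    push_neg at h
    have : k - 1 < k := by
      rcases Nat.eq_zero_or_pos k with h0 | h0
      · omega
      · omega
    have hmin := Nat.find_min hex this
    push_neg at hmin
    rw [cumSum_total hγ (by omega)] at hmin
    exact absurd hx.2 (not_le.mpr hmin)
  refine ⟨⟨k, hkm⟩, ?_⟩
  rcases Nat.eq_zero_or_pos k with h0 | h0
  · rw [blockI, if_pos (by exact_mod_cast h0)]
    refine ⟨hx.1, ?_⟩
    simpa [h0] using hk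
  · rw [blockI, if_neg (by simp; omega)]
    refine ⟨?_, by exact_mod_cast hk⟩
    have hmin := Nat.find_min hex (by omega : k - 1 < k)
    push_neg at hmin
    have : k - 1 + 1 = k := by omega
    rw [this] at hmin
    exact_mod_cast hmin

lemma measurableSet_blockI (γ : Fin m → ℝ) (j : Fin m) : MeasurableSet (blockI γ j) := by
  rw [blockI]
  split_ifs
  · exact measurableSet_Icc
  · exact measurableSet_Ioc

lemma volume_blockI {γ : Fin m → ℝ} (hγ : GoodWidths γ) (j : Fin m) :
    volume (blockI γ j) = ENNReal.ofReal (γ j) := by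
  rw [blockI]
  split_ifs with h
  · have h1 : cumSum γ 1 = γ j := by
      have := cumSum_succ γ j
      rw [h] at this
      simpa [cumSum_zero] using this
    rw [Real.volume_Icc, h1, sub_zero]
  · rw [Real.volume_Ioc, cumSum_succ γ j]
    ring_nf

lemma Icc_eq_iUnion_blockI {γ : Fin m → ℝ} (hγ : GoodWidths γ) :
    Set.Icc (0:ℝ) 1 = ⋃ j : Fin m, blockI γ j := by
  ext x
  simp only [Set.mem_iUnion]
  exact ⟨fun h => blockI_cover hγ h, fun ⟨j, hj⟩ => blockI_subset hγ j hj⟩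

end Blocks
section BlockFn
variable {m : ℕ}

open Classical in
/-- Canonical block function attached to a matrix. -/
def blockFn (γ : Fin m → ℝ) (M : Fin m → Fin m → ℝ) : ℝ → ℝ → ℝ := fun x y =>
  if h : (∃ i, x ∈ blockI γ i) ∧ (∃ j, y ∈ blockI γ j) then M h.1.choose h.2.choose else 0

lemma blockFn_eq {γ : Fin m → ℝ} (hγ : GoodWidths γ) (M : Fin m → Fin m → ℝ)
    {i j : Fin m} {x y : ℝ} (hx : x ∈ blockI γ i) (hy : y ∈ blockI γ j) :
    blockFn γ M x y = M i j := by
  classical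
  have h : (∃ i, x ∈ blockI γ i) ∧ (∃ j, y ∈ blockI γ j) := ⟨⟨i, hx⟩, ⟨j, hy⟩⟩
  rw [blockFn, dif_pos h]
  have e1 : h.1.choose = i := by
    by_contra hne
    exact Set.disjoint_left.mp (blockI_disjoint hγ hne) h.1.choose_spec hx
  have e2 : h.2.choose = j := by
    by_contra hne
    exact Set.disjoint_left.mp (blockI_disjoint hγ hne) h.2.choose_spec hy
  rw [e1, e2]

lemma blockFn_isBlockGraphon {γ : Fin m → ℝ} (hγ : GoodWidths γ) {M : Fin m → Fin m → ℝ}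
    (hM : ∀ i j, M i j ∈ Set.Icc (0:ℝ) 1) (hMs : ∀ i j, M i j = M j i) :
    IsBlockGraphon γ M (blockFn γ M) :=
  ⟨hM, hMs, fun i j x hx y hy => blockFn_eq hγ M hx hy⟩

lemma blockFn_isGraphon {γ : Fin m → ℝ} (hγ : GoodWidths γ) {M : Fin m → Fin m → ℝ}
    (hM : ∀ i j, M i j ∈ Set.Icc (0:ℝ) 1) (hMs : ∀ i j, M i j = M j i) :
    IsGraphon (blockFn γ M) := by
  classical
  refine ⟨?_, ?_, ?_⟩
  · have key : Function.uncurry (blockFn γ M) = fun q : ℝ × ℝ =>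
        ∑ p : Fin m × Fin m,
          Set.indicator (blockI γ p.1 ×ˢ blockI γ p.2) (fun _ => M p.1 p.2) q := by
      funext q
      by_cases h1 : ∃ i, q.1 ∈ blockI γ i
      · by_cases h2 : ∃ j, q.2 ∈ blockI γ j
        · obtain ⟨i, hi⟩ := h1
          obtain ⟨j, hj⟩ := h2
          have : Function.uncurry (blockFn γ M) q = M i j := blockFn_eq hγ M hi hj
          rw [this]
          rw [Finset.sum_eq_single (i, j)]
          · rw [Set.indicator_of_mem (Set.mk_mem_prod hi hj)]
          · intro p _ hne
            rw [Set.indicator_of_notMem]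
            intro hmem
            rcases Set.mem_prod.mp hmem with ⟨hm1, hm2⟩
            have e1 : p.1 = i := by
              by_contra hc
              exact Set.disjoint_left.mp (blockI_disjoint hγ hc) hm1 hi
            have e2 : p.2 = j := by
              by_contra hc
              exact Set.disjoint_left.mp (blockI_disjoint hγ hc) hm2 hj
            exact hne (Prod.ext e1 e2)
          · intro h; exact absurd (Finset.mem_univ _) h
        · have hz : Function.uncurry (blockFn γ M) q = 0 := by
            rw [Function.uncurry, blockFn, dif_neg (by tauto)]
          rw [hz]
          symm
          refine Finset.sum_eq_zero fun p _ => ?_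
          rw [Set.indicator_of_notMem]
          intro hmem
          exact h2 ⟨p.2, (Set.mem_prod.mp hmem).2⟩
      · have hz : Function.uncurry (blockFn γ M) q = 0 := by
          rw [Function.uncurry, blockFn, dif_neg (by tauto)]
        rw [hz]
        symm
        refine Finset.sum_eq_zero fun p _ => ?_
        rw [Set.indicator_of_notMem]
        intro hmem
        exact h1 ⟨p.1, (Set.mem_prod.mp hmem).1⟩
    rw [key]
    refine Finset.measurable_sum _ fun p _ => ?_
    exact Measurable.indicator measurable_const
      ((measurableSet_blockI γ p.1).prod (measurableSet_blockI γ p.2))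
  · intro x y
    rw [blockFn]
    split_ifs with h
    · exact hM _ _
    · exact ⟨le_refl 0, zero_le_one⟩
  · intro x y
    by_cases h1 : ∃ i, x ∈ blockI γ i
    · by_cases h2 : ∃ j, y ∈ blockI γ j
      · obtain ⟨i, hi⟩ := h1
        obtain ⟨j, hj⟩ := h2
        rw [blockFn_eq hγ M hi hj, blockFn_eq hγ M hj hi, hMs]
      · rw [blockFn, blockFn, dif_neg (by tauto), dif_neg (by tauto)]
    · rw [blockFn, blockFn, dif_neg (by tauto), dif_neg (by tauto)]

end BlockFn
section Tpoly
variable {v m : ℕ}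

/-- The homomorphism density of a block graphon, as a polynomial in the matrix. -/
def Tpoly (H : SimpleGraph (Fin v)) [DecidableRel H.Adj] (γ : Fin m → ℝ)
    (M : Fin m → Fin m → ℝ) : ℝ :=
  ∑ φ : Fin v → Fin m, (∏ i, γ (φ i)) *
    ∏ e ∈ Finset.univ.filter (fun e : Fin v × Fin v => e.1 < e.2 ∧ H.Adj e.1 e.2),
      M (φ e.1) (φ e.2)

lemma homDensity_block (H : SimpleGraph (Fin v)) [DecidableRel H.Adj]
    {γ : Fin m → ℝ} (hγ : GoodWidths γ) {M : Fin m → Fin m → ℝ} {g : ℝ → ℝ → ℝ}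
    (hg : IsBlockGraphon γ M g) : homDensity H g = Tpoly H γ M := by
  classical
  set E := Finset.univ.filter (fun e : Fin v × Fin v => e.1 < e.2 ∧ H.Adj e.1 e.2) with hE
  set S : (Fin v → Fin m) → Set (Fin v → ℝ) :=
    fun φ => Set.univ.pi (fun i => blockI γ (φ i)) with hS
  have hmeas : ∀ φ, MeasurableSet (S φ) :=
    fun φ => MeasurableSet.univ_pi fun i => measurableSet_blockI γ (φ i)
  have hdisj : Pairwise (Function.onFun Disjoint S) := by
    intro φ ψ hne
    obtain ⟨i, hi⟩ := Function.ne_iff.mp hne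
    rw [Function.onFun]
    rw [Set.disjoint_left]
    intro x hx hx'
    exact Set.disjoint_left.mp (blockI_disjoint hγ hi)
      (hx i (Set.mem_univ i)) (hx' i (Set.mem_univ i))
  have hvol : ∀ φ, volume (S φ) = ENNReal.ofReal (∏ i, γ (φ i)) := by
    intro φ
    rw [hS]
    rw [volume_pi_pi]
    rw [show (∏ i : Fin v, volume (blockI γ (φ i)))
        = ∏ i : Fin v, ENNReal.ofReal (γ (φ i)) from
      Finset.prod_congr rfl fun i _ => volume_blockI hγ (φ i)]
    exact (ENNReal.ofReal_prod_of_nonneg fun i _ => (hγ.1 (φ i)).le).symm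
  have hcup : (Set.univ.pi fun _ : Fin v => Set.Icc (0:ℝ) 1) = ⋃ φ, S φ := by
    ext x
    simp only [Set.mem_pi, Set.mem_univ, forall_true_left, Set.mem_iUnion, hS]
    constructor
    · intro h
      choose φ hφ using fun i => blockI_cover hγ (h i)
      exact ⟨φ, fun i => hφ i⟩
    · rintro ⟨φ, hφ⟩ i
      exact blockI_subset hγ (φ i) (hφ i)
  have hconst : ∀ φ : Fin v → Fin m, ∀ x ∈ S φ,
      (∏ e ∈ E, g (x e.1) (x e.2)) = ∏ e ∈ E, M (φ e.1) (φ e.2) := by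
    intro φ x hx
    refine Finset.prod_congr rfl fun e _ => ?_
    exact hg.2.2 (φ e.1) (φ e.2) (x e.1) (hx e.1 (Set.mem_univ _)) (x e.2) (hx e.2 (Set.mem_univ _))
  have hint : ∀ φ : Fin v → Fin m,
      IntegrableOn (fun x : Fin v → ℝ => ∏ e ∈ E, g (x e.1) (x e.2)) (S φ) := by
    intro φ
    refine IntegrableOn.congr_fun ?_ (fun x hx => (hconst φ x hx).symm) (hmeas φ)
    refine (integrableOn_const_iff).mpr (Or.inr ?_)
    rw [hvol φ]
    exact ENNReal.ofReal_lt_top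
  rw [homDensity, hcup, integral_iUnion_fintype hmeas hdisj hint]
  refine Finset.sum_congr rfl fun φ _ => ?_
  rw [setIntegral_congr_fun (hmeas φ) (fun x hx => hconst φ x hx)]
  rw [setIntegral_const, measureReal_def, hvol φ, smul_eq_mul,
    ENNReal.toReal_ofReal (Finset.prod_nonneg fun i _ => (hγ.1 (φ i)).le)]

end Tpoly
section IentBlock
variable {v m : ℕ}

lemma Tpoly_mono (H : SimpleGraph (Fin v)) [DecidableRel H.Adj] {γ : Fin m → ℝ}
    (hγ : GoodWidths γ) {M M' : Fin m → Fin m → ℝ} (hM : ∀ i j, 0 ≤ M i j)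
    (h : ∀ i j, M i j ≤ M' i j) : Tpoly H γ M ≤ Tpoly H γ M' := by
  refine Finset.sum_le_sum fun φ _ => ?_
  refine mul_le_mul_of_nonneg_left ?_ (Finset.prod_nonneg fun i _ => (hγ.1 (φ i)).le)
  exact Finset.prod_le_prod (fun e _ => hM _ _) (fun e _ => h _ _)

lemma Tpoly_nonneg (H : SimpleGraph (Fin v)) [DecidableRel H.Adj] {γ : Fin m → ℝ}
    (hγ : GoodWidths γ) {M : Fin m → Fin m → ℝ} (hM : ∀ i j, 0 ≤ M i j) :
    0 ≤ Tpoly H γ M := by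
  refine Finset.sum_nonneg fun φ _ => mul_nonneg
    (Finset.prod_nonneg fun i _ => (hγ.1 (φ i)).le)
    (Finset.prod_nonneg fun e _ => hM _ _)

lemma unitSq_eq_iUnion {γ : Fin m → ℝ} (hγ : GoodWidths γ) :
    unitSq = ⋃ p : Fin m × Fin m, blockI γ p.1 ×ˢ blockI γ p.2 := by
  ext q
  simp only [unitSq, Set.mem_prod, Set.mem_iUnion]
  constructor
  · rintro ⟨h1, h2⟩
    obtain ⟨i, hi⟩ := blockI_cover hγ h1
    obtain ⟨j, hj⟩ := blockI_cover hγ h2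
    exact ⟨(i, j), hi, hj⟩
  · rintro ⟨p, h1, h2⟩
    exact ⟨blockI_subset hγ p.1 h1, blockI_subset hγ p.2 h2⟩

lemma Ient_block {γ : Fin m → ℝ} (hγ : GoodWidths γ) {P Q : Fin m → Fin m → ℝ}
    {W₀ f : ℝ → ℝ → ℝ} (hW : IsBlockGraphon γ P W₀) (hf : IsBlockGraphon γ Q f) :
    Ient W₀ f = (1/2) * ∑ p : Fin m × Fin m,
      ENNReal.ofReal (γ p.1 * γ p.2) * relEnt (P p.1 p.2) (Q p.1 p.2) := by
  classical
  have hmeas : ∀ p : Fin m × Fin m, MeasurableSet (blockI γ p.1 ×ˢ blockI γ p.2) :=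
    fun p => (measurableSet_blockI γ p.1).prod (measurableSet_blockI γ p.2)
  have hdisj : Pairwise (Function.onFun Disjoint fun p : Fin m × Fin m => blockI γ p.1 ×ˢ blockI γ p.2) := by
    intro p p' hne
    rw [Function.onFun, Set.disjoint_left]
    intro q hq hq'
    rcases Set.mem_prod.mp hq with ⟨h1, h2⟩
    rcases Set.mem_prod.mp hq' with ⟨h1', h2'⟩
    have e1 : p.1 = p'.1 := by
      by_contra hc
      exact Set.disjoint_left.mp (blockI_disjoint hγ hc) h1 h1'
    have e2 : p.2 = p'.2 := by
      by_contra hc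
      exact Set.disjoint_left.mp (blockI_disjoint hγ hc) h2 h2'
    exact hne (Prod.ext e1 e2)
  rw [Ient, unitSq_eq_iUnion hγ, lintegral_iUnion hmeas hdisj, tsum_fintype]
  congr 1
  refine Finset.sum_congr rfl fun p _ => ?_
  rw [setLIntegral_congr_fun (hmeas p) (
    (fun q hq => show relEnt (W₀ q.1 q.2) (f q.1 q.2) = relEnt (P p.1 p.2) (Q p.1 p.2) by
      rcases Set.mem_prod.mp hq with ⟨h1, h2⟩
      rw [hW.2.2 p.1 p.2 q.1 h1 q.2 h2, hf.2.2 p.1 p.2 q.1 h1 q.2 h2]))]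
  rw [setLIntegral_const]
  rw [show volume (blockI γ p.1 ×ˢ blockI γ p.2) = ENNReal.ofReal (γ p.1 * γ p.2) by
    rw [Measure.volume_eq_prod, Measure.prod_prod, volume_blockI hγ, volume_blockI hγ,
      ENNReal.ofReal_mul (hγ.1 p.1).le]]
  rw [mul_comm]

end IentBlock
section Wmax
variable {v m : ℕ}

/-- Matrix of the maximal graphon in `W_Ω`. -/
def Rmat (P : Fin m → Fin m → ℝ) : Fin m → Fin m → ℝ :=
  fun i j => if P i j ∈ Set.Ioo (0:ℝ) 1 then 1 else P i j

open Classical in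
/-- The maximal graphon in `W_Ω`. -/
def wmax (W₀ : ℝ → ℝ → ℝ) : ℝ → ℝ → ℝ :=
  fun x y => if (x, y) ∈ OmegaSet W₀ then 1 else W₀ x y

lemma measurableSet_unitSq : MeasurableSet unitSq :=
  measurableSet_Icc.prod measurableSet_Icc

lemma measurableSet_OmegaSet {W₀ : ℝ → ℝ → ℝ} (hW : IsGraphon W₀) :
    MeasurableSet (OmegaSet W₀) := by
  have : OmegaSet W₀ = unitSq ∩ (Function.uncurry W₀) ⁻¹' (Set.Ioo (0:ℝ) 1) := rfl
  rw [this]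
  exact measurableSet_unitSq.inter (hW.1 measurableSet_Ioo)

lemma OmegaSet_symm {W₀ : ℝ → ℝ → ℝ} (hW : IsGraphon W₀) {x y : ℝ} :
    (x, y) ∈ OmegaSet W₀ ↔ (y, x) ∈ OmegaSet W₀ := by
  simp only [OmegaSet, Set.mem_setOf_eq, unitSq, Set.mem_prod]
  rw [hW.2.2 x y]
  tauto

lemma wmax_isGraphon {W₀ : ℝ → ℝ → ℝ} (hW : IsGraphon W₀) : IsGraphon (wmax W₀) := by
  classical
  refine ⟨?_, ?_, ?_⟩
  · have : Function.uncurry (wmax W₀) = fun q : ℝ × ℝ =>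
        if q ∈ OmegaSet W₀ then 1 else Function.uncurry W₀ q := by
      funext q; rcases q with ⟨x, y⟩; rfl
    rw [this]
    exact Measurable.ite (measurableSet_OmegaSet hW) measurable_const hW.1
  · intro x y
    rw [wmax]
    split_ifs
    · exact ⟨zero_le_one, le_refl 1⟩
    · exact hW.2.1 x y
  · intro x y
    rw [wmax, wmax]
    by_cases h : (x, y) ∈ OmegaSet W₀
    · rw [if_pos h, if_pos ((OmegaSet_symm hW).mp h)]
    · rw [if_neg h, if_neg (fun h' => h ((OmegaSet_symm hW).mp h')), hW.2.2]

lemma wmax_isBlockGraphon {γ : Fin m → ℝ} (hγ : GoodWidths γ) {P : Fin m → Fin m → ℝ}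
    {W₀ : ℝ → ℝ → ℝ} (hWb : IsBlockGraphon γ P W₀) :
    IsBlockGraphon γ (Rmat P) (wmax W₀) := by
  refine ⟨?_, ?_, ?_⟩
  · intro i j
    rw [Rmat]
    split_ifs
    · exact ⟨zero_le_one, le_refl 1⟩
    · exact hWb.1 i j
  · intro i j
    rw [Rmat, Rmat, hWb.2.1 i j]
  · intro i j x hx y hy
    have hxy : (x, y) ∈ unitSq :=
      Set.mk_mem_prod (blockI_subset hγ i hx) (blockI_subset hγ j hy)
    have hval : W₀ x y = P i j := hWb.2.2 i j x hx y hy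
    rw [wmax, Rmat]
    by_cases h : P i j ∈ Set.Ioo (0:ℝ) 1
    · rw [if_pos ⟨hxy, hval ▸ h⟩, if_pos h]
    · rw [if_neg (fun h' => h (hval ▸ h'.2)), if_neg h, hval]

/-- Pushing forward the restricted product measure along a pair of coordinates. -/
lemma pair_preimage_null {N : Set (ℝ × ℝ)} (hN : MeasurableSet N) (hN0 : volume N = 0)
    {i j : Fin v} (hij : i ≠ j) :
    volume.restrict (Set.univ.pi fun _ : Fin v => Set.Icc (0:ℝ) 1)
      {x : Fin v → ℝ | (x i, x j) ∈ N} = 0 := by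
  classical
  set μIcc : Measure ℝ := volume.restrict (Set.Icc (0:ℝ) 1) with hμIcc
  haveI : IsProbabilityMeasure μIcc := by
    constructor
    rw [hμIcc, Measure.restrict_apply_univ, Real.volume_Icc]
    norm_num
  have hres : volume.restrict (Set.univ.pi fun _ : Fin v => Set.Icc (0:ℝ) 1)
      = Measure.pi (fun _ : Fin v => μIcc) := by
    refine (Measure.pi_eq (μ := fun _ : Fin v => μIcc) fun s hs => ?_).symm
    rw [Measure.restrict_apply (MeasurableSet.univ_pi hs), ← Set.pi_inter_distrib,
      volume_pi_pi]
    exact Finset.prod_congr rfl fun k _ => (Measure.restrict_apply (hs k)).symm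
  have hpair : Measurable (fun x : Fin v → ℝ => (x i, x j)) :=
    (measurable_pi_apply i).prodMk (measurable_pi_apply j)
  have hmap : (Measure.pi fun _ : Fin v => μIcc).map (fun x => (x i, x j))
      = μIcc.prod μIcc := by
    refine (Measure.prod_eq fun s t hs ht => ?_).symm
    rw [Measure.map_apply hpair (hs.prod ht)]
    have hpre : (fun x : Fin v → ℝ => (x i, x j)) ⁻¹' (s ×ˢ t)
        = Set.univ.pi (fun k => if k = i then s else if k = j then t else Set.univ) := by
      ext x
      simp only [Set.mem_preimage, Set.mem_prod, Set.mem_pi, Set.mem_univ, forall_true_left]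
      constructor
      · rintro ⟨h1, h2⟩ k
        split_ifs with e1 e2
        · rwa [e1]
        · rwa [e2]
        · exact Set.mem_univ _
      · intro h
        constructor
        · have := h i; rwa [if_pos rfl] at this
        · have := h j; rw [if_neg hij.symm, if_pos rfl] at this; exact this
    rw [hpre, Measure.pi_pi]
    rw [← Finset.prod_mul_prod_compl {i, j}]
    have h1 : ∏ k ∈ ({i, j} : Finset (Fin v)),
        μIcc (if k = i then s else if k = j then t else Set.univ) = μIcc s * μIcc t := by
      rw [Finset.prod_pair hij]
      rw [if_pos rfl, if_neg hij.symm, if_pos rfl]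
    have h2 : ∏ k ∈ ({i, j} : Finset (Fin v))ᶜ,
        μIcc (if k = i then s else if k = j then t else Set.univ) = 1 := by
      refine Finset.prod_eq_one fun k hk => ?_
      simp only [Finset.mem_compl, Finset.mem_insert, Finset.mem_singleton] at hk
      push_neg at hk
      rw [if_neg hk.1, if_neg hk.2]
      exact measure_univ
    rw [h1, h2, mul_one]
  have key : {x : Fin v → ℝ | (x i, x j) ∈ N} = (fun x : Fin v → ℝ => (x i, x j)) ⁻¹' N := rfl
  rw [hres, key, ← Measure.map_apply hpair hN, hmap, Measure.prod_restrict,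
    Measure.restrict_apply hN]
  refine le_antisymm (le_trans (measure_mono (Set.inter_subset_left)) ?_) (zero_le)
  rw [← Measure.volume_eq_prod, hN0]

end Wmax
section SupBound
variable {v m : ℕ}

lemma prod_edge_mem_Icc {v' : ℕ} (E : Finset (Fin v' × Fin v')) {h : ℝ → ℝ → ℝ}
    (hh : ∀ x y, h x y ∈ Set.Icc (0:ℝ) 1) (x : Fin v' → ℝ) :
    (∏ e ∈ E, h (x e.1) (x e.2)) ∈ Set.Icc (0:ℝ) 1 := by
  constructor
  · exact Finset.prod_nonneg fun e _ => (hh _ _).1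
  · exact Finset.prod_le_one (fun e _ => (hh _ _).1) (fun e _ => (hh _ _).2)

lemma integrableOn_prod_edge {v' : ℕ} (E : Finset (Fin v' × Fin v')) {h : ℝ → ℝ → ℝ}
    (hmeas : Measurable (Function.uncurry h)) (hh : ∀ x y, h x y ∈ Set.Icc (0:ℝ) 1) :
    IntegrableOn (fun x : Fin v' → ℝ => ∏ e ∈ E, h (x e.1) (x e.2))
      (Set.univ.pi fun _ : Fin v' => Set.Icc (0:ℝ) 1) := by
  have hvol : volume (Set.univ.pi fun _ : Fin v' => Set.Icc (0:ℝ) 1) ≠ ⊤ := by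
    rw [volume_pi_pi]
    simp [Real.volume_Icc]
  have hm : Measurable (fun x : Fin v' → ℝ => ∏ e ∈ E, h (x e.1) (x e.2)) := by
    refine Finset.measurable_prod _ fun e _ => ?_
    have heq : (fun x : Fin v' → ℝ => h (x e.1) (x e.2))
        = Function.uncurry h ∘ (fun x => (x e.1, x e.2)) := rfl
    rw [heq]
    exact hmeas.comp ((measurable_pi_apply e.1).prodMk (measurable_pi_apply e.2))
  refine Measure.integrableOn_of_bounded (M := 1) hvol hm.aestronglyMeasurable ?_
  refine Filter.Eventually.of_forall fun x => ?_
  rw [Real.norm_eq_abs, abs_le]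
  have := prod_edge_mem_Icc E hh x
  exact ⟨by linarith [this.1], this.2⟩

lemma homDensity_le_wmax (H : SimpleGraph (Fin v)) [DecidableRel H.Adj] {W₀ g : ℝ → ℝ → ℝ}
    (hW : IsGraphon W₀) (hg : MemWOmega W₀ g) :
    homDensity H g ≤ homDensity H (wmax W₀) := by
  classical
  set E := Finset.univ.filter (fun e : Fin v × Fin v => e.1 < e.2 ∧ H.Adj e.1 e.2) with hE
  set S : Set (Fin v → ℝ) := Set.univ.pi fun _ : Fin v => Set.Icc (0:ℝ) 1 with hSdef
  have hSmeas : MeasurableSet S := MeasurableSet.univ_pi fun _ => measurableSet_Icc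
  have hD : MeasurableSet (unitSq \ OmegaSet W₀) :=
    measurableSet_unitSq.diff (measurableSet_OmegaSet hW)
  have hEbad : volume ({q : ℝ × ℝ | g q.1 q.2 ≠ W₀ q.1 q.2} ∩ (unitSq \ OmegaSet W₀)) = 0 := by
    have := hg.2
    rw [ae_iff] at this
    rwa [Measure.restrict_apply' hD] at this
  set N := toMeasurable volume ({q : ℝ × ℝ | g q.1 q.2 ≠ W₀ q.1 q.2} ∩ (unitSq \ OmegaSet W₀))
    with hNdef
  have hNmeas : MeasurableSet N := measurableSet_toMeasurable _ _
  have hN0 : volume N = 0 := by rw [hNdef, measure_toMeasurable]; exact hEbad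
  have hsub : {q : ℝ × ℝ | g q.1 q.2 ≠ W₀ q.1 q.2} ∩ (unitSq \ OmegaSet W₀) ⊆ N :=
    subset_toMeasurable _ _
  have hae2 : ∀ᵐ x ∂(volume.restrict S), ∀ e ∈ E, (x e.1, x e.2) ∉ N := by
    rw [Filter.eventually_all_finset]
    intro e he
    have hne : e.1 ≠ e.2 := ne_of_lt (Finset.mem_filter.mp he).2.1
    have := pair_preimage_null hNmeas hN0 hne
    exact measure_eq_zero_iff_ae_notMem.mp this
  have hmono : ∀ᵐ x ∂(volume.restrict S),
      (∏ e ∈ E, g (x e.1) (x e.2)) ≤ ∏ e ∈ E, wmax W₀ (x e.1) (x e.2) := by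
    filter_upwards [hae2, ae_restrict_mem hSmeas] with x hx hxS
    refine Finset.prod_le_prod (fun e _ => (hg.1.2.1 _ _).1) (fun e he => ?_)
    have hq : (x e.1, x e.2) ∈ unitSq :=
      Set.mk_mem_prod (hxS e.1 (Set.mem_univ _)) (hxS e.2 (Set.mem_univ _))
    by_cases hΩ : (x e.1, x e.2) ∈ OmegaSet W₀
    · rw [wmax, if_pos hΩ]
      exact (hg.1.2.1 _ _).2
    · rw [wmax, if_neg hΩ]
      have : (x e.1, x e.2) ∉ {q : ℝ × ℝ | g q.1 q.2 ≠ W₀ q.1 q.2} ∩ (unitSq \ OmegaSet W₀) :=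
        fun hmem => hx e he (hsub hmem)
      have heq : g (x e.1) (x e.2) = W₀ (x e.1) (x e.2) := by
        by_contra hne
        exact this ⟨hne, hq, hΩ⟩
      rw [heq]
  exact setIntegral_mono_ae_restrict
    (integrableOn_prod_edge E hg.1.1 hg.1.2.1)
    (integrableOn_prod_edge E (wmax_isGraphon hW).1 (wmax_isGraphon hW).2.1) hmono

lemma Rmat_nonneg {P : Fin m → Fin m → ℝ} (hP : ∀ i j, P i j ∈ Set.Icc (0:ℝ) 1) :
    ∀ i j, 0 ≤ Rmat P i j := by
  intro i j
  rw [Rmat]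
  split_ifs
  · exact zero_le_one
  · exact (hP i j).1

lemma sSup_bound (H : SimpleGraph (Fin v)) [DecidableRel H.Adj] {γ : Fin m → ℝ}
    (hγ : GoodWidths γ) {P : Fin m → Fin m → ℝ} {W₀ : ℝ → ℝ → ℝ}
    (hW : IsGraphon W₀) (hWb : IsBlockGraphon γ P W₀) :
    sSup {s : ℝ | ∃ g, MemWOmega W₀ g ∧ s = homDensity H g} ≤ Tpoly H γ (Rmat P) := by
  apply Real.sSup_le
  · rintro x ⟨g, hg, rfl⟩
    calc homDensity H g ≤ homDensity H (wmax W₀) := homDensity_le_wmax H hW hg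
      _ = Tpoly H γ (Rmat P) := homDensity_block H hγ (wmax_isBlockGraphon hγ hWb)
  · exact Tpoly_nonneg H hγ (Rmat_nonneg hWb.1)

end SupBound
section ModMat
variable {v m : ℕ}

lemma modMat_mem_Icc {P : Fin m → Fin m → ℝ} (hP : ∀ i j, P i j ∈ Set.Icc (0:ℝ) 1)
    {a b : Fin m} {q : ℝ} (hq : q ∈ Set.Icc (0:ℝ) 1) :
    ∀ i j, modMat P a b q i j ∈ Set.Icc (0:ℝ) 1 := by
  intro i j
  rw [modMat]
  split_ifs
  · exact hq
  · exact hP i j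

lemma modMat_symm {P : Fin m → Fin m → ℝ} (hP : ∀ i j, P i j = P j i)
    (a b : Fin m) (q : ℝ) : ∀ i j, modMat P a b q i j = modMat P a b q j i := by
  intro i j
  rw [modMat, modMat]
  by_cases h : (i = a ∧ j = b) ∨ (i = b ∧ j = a)
  · rw [if_pos h, if_pos (by tauto)]
  · rw [if_neg h, if_neg (by tauto), hP]

lemma modMat_le {P : Fin m → Fin m → ℝ} (hP : ∀ i j, P i j = P j i) {a b : Fin m} {q : ℝ}
    (hq : q ≤ P a b) : ∀ i j, modMat P a b q i j ≤ P i j := by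
  intro i j
  rw [modMat]
  split_ifs with h
  · rcases h with ⟨h1, h2⟩ | ⟨h1, h2⟩
    · rw [h1, h2]; exact hq
    · rw [h1, h2, ← hP]; exact hq
  · exact le_refl _

lemma modMat_nonneg {P : Fin m → Fin m → ℝ} (hP : ∀ i j, 0 ≤ P i j) {a b : Fin m} {q : ℝ}
    (hq : 0 ≤ q) : ∀ i j, 0 ≤ modMat P a b q i j := by
  intro i j
  rw [modMat]
  split_ifs
  · exact hq
  · exact hP i j

lemma modMat_self {P : Fin m → Fin m → ℝ} (hP : ∀ i j, P i j = P j i) (a b : Fin m) :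
    modMat P a b (P a b) = P := by
  funext i j
  rw [modMat]
  split_ifs with h
  · rcases h with ⟨h1, h2⟩ | ⟨h1, h2⟩
    · rw [h1, h2]
    · rw [h1, h2, hP]
  · rfl

lemma modMat_apply_ab {P : Fin m → Fin m → ℝ} {a b i j : Fin m} {q : ℝ}
    (h : (i = a ∧ j = b) ∨ (i = b ∧ j = a)) : modMat P a b q i j = q := by
  rw [modMat, if_pos h]

lemma modMat_apply_other {P : Fin m → Fin m → ℝ} {a b i j : Fin m} {q : ℝ}
    (h : ¬ ((i = a ∧ j = b) ∨ (i = b ∧ j = a))) : modMat P a b q i j = P i j := by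
  rw [modMat, if_neg h]

lemma continuous_Tpoly_modMat (H : SimpleGraph (Fin v)) [DecidableRel H.Adj]
    (γ : Fin m → ℝ) (Q : Fin m → Fin m → ℝ) (a b : Fin m) :
    Continuous fun x : ℝ => Tpoly H γ (modMat Q a b x) := by
  apply continuous_finset_sum
  intro φ _
  apply Continuous.mul continuous_const
  apply continuous_finset_prod
  intro e _
  by_cases h : (φ e.1 = a ∧ φ e.2 = b) ∨ (φ e.1 = b ∧ φ e.2 = a)
  · simp only [modMat, if_pos h]
    exact continuous_id
  · simp only [modMat, if_neg h]
    exact continuous_const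

lemma real_sum_eq_term {ι : Type*} {s : Finset ι} {f g : ι → ℝ}
    (hle : ∀ i ∈ s, f i ≤ g i) (hsum : ∑ i ∈ s, f i = ∑ i ∈ s, g i) :
    ∀ i ∈ s, f i = g i := by
  intro i hi
  by_contra h
  have := Finset.sum_lt_sum hle ⟨i, hi, lt_of_le_of_ne (hle i hi) h⟩
  rw [hsum] at this
  exact lt_irrefl _ this

/-- If lowering the `(a,b)` entry of `P` to some `q < P a b` does not change `Tpoly`,
then for a matrix `Q` vanishing wherever `P` vanishes (and with `Q a b > 0`),
lowering the `(a,b)` entry of `Q` to `P a b` does not change `Tpoly` either. -/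
lemma Tpoly_modMat_eq (H : SimpleGraph (Fin v)) [DecidableRel H.Adj] {γ : Fin m → ℝ}
    (hγ : GoodWidths γ) {P Q : Fin m → Fin m → ℝ}
    (hP : ∀ i j, P i j ∈ Set.Icc (0:ℝ) 1) (hPs : ∀ i j, P i j = P j i)
    {a b : Fin m} {q : ℝ} (hq0 : 0 ≤ q) (hqP : q < P a b)
    (heq : Tpoly H γ (modMat P a b q) = Tpoly H γ P)
    (hzero : ∀ i j, P i j = 0 → Q i j = 0) (hQab : 0 < Q a b) :
    Tpoly H γ (modMat Q a b (P a b)) = Tpoly H γ Q := by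
  classical
  simp only [Tpoly] at heq ⊢
  set E := Finset.univ.filter (fun e : Fin v × Fin v => e.1 < e.2 ∧ H.Adj e.1 e.2) with hE
  have hle : ∀ φ ∈ (Finset.univ : Finset (Fin v → Fin m)),
      (∏ i, γ (φ i)) * ∏ e ∈ E, modMat P a b q (φ e.1) (φ e.2)
        ≤ (∏ i, γ (φ i)) * ∏ e ∈ E, P (φ e.1) (φ e.2) := by
    intro φ _
    refine mul_le_mul_of_nonneg_left ?_ (Finset.prod_nonneg fun i _ => (hγ.1 (φ i)).le)
    exact Finset.prod_le_prod (fun e _ => modMat_nonneg (fun i j => (hP i j).1) hq0 _ _)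
      (fun e _ => modMat_le hPs hqP.le _ _)
  refine Finset.sum_congr rfl fun φ _ => ?_
  have hterm := real_sum_eq_term hle heq φ (Finset.mem_univ φ)
  congr 1
  by_cases hab : ∃ e ∈ E, (φ e.1 = a ∧ φ e.2 = b) ∨ (φ e.1 = b ∧ φ e.2 = a)
  · have hw : 0 < ∏ i, γ (φ i) := Finset.prod_pos fun i _ => hγ.1 (φ i)
    have hprodeq : ∏ e ∈ E, modMat P a b q (φ e.1) (φ e.2) = ∏ e ∈ E, P (φ e.1) (φ e.2) :=
      mul_left_cancel₀ (ne_of_gt hw) hterm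
    obtain ⟨e0, he0, habe0⟩ := hab
    have hPe0 : P (φ e0.1) (φ e0.2) = P a b := by
      rcases habe0 with ⟨h1, h2⟩ | ⟨h1, h2⟩
      · rw [h1, h2]
      · rw [h1, h2, ← hPs]
    have hexzero : ∃ e1 ∈ E, P (φ e1.1) (φ e1.2) = 0 := by
      by_contra hc
      push_neg at hc
      have hpos : ∀ e ∈ E, 0 < P (φ e.1) (φ e.2) := fun e he =>
        lt_of_le_of_ne (hP _ _).1 (Ne.symm (hc e he))
      have hposE : 0 < ∏ e ∈ E.erase e0, P (φ e.1) (φ e.2) :=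
        Finset.prod_pos fun e he => hpos e (Finset.mem_of_mem_erase he)
      have hlt : ∏ e ∈ E, modMat P a b q (φ e.1) (φ e.2) < ∏ e ∈ E, P (φ e.1) (φ e.2) := by
        rw [← Finset.mul_prod_erase E _ he0,
          ← Finset.mul_prod_erase E (fun e => P (φ e.1) (φ e.2)) he0]
        calc modMat P a b q (φ e0.1) (φ e0.2) * ∏ e ∈ E.erase e0, modMat P a b q (φ e.1) (φ e.2)
            ≤ q * ∏ e ∈ E.erase e0, P (φ e.1) (φ e.2) := by
              rw [modMat_apply_ab habe0]
              refine mul_le_mul_of_nonneg_left ?_ hq0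
              exact Finset.prod_le_prod
                (fun e _ => modMat_nonneg (fun i j => (hP i j).1) hq0 _ _)
                (fun e _ => modMat_le hPs hqP.le _ _)
          _ < P (φ e0.1) (φ e0.2) * ∏ e ∈ E.erase e0, P (φ e.1) (φ e.2) := by
              rw [hPe0]
              exact mul_lt_mul_of_pos_right hqP hposE
      rw [hprodeq] at hlt
      exact lt_irrefl _ hlt
    obtain ⟨e1, he1, hPz⟩ := hexzero
    have hne_ab : ¬ ((φ e1.1 = a ∧ φ e1.2 = b) ∨ (φ e1.1 = b ∧ φ e1.2 = a)) := by
      intro hcon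
      have hPeq : P (φ e1.1) (φ e1.2) = P a b := by
        rcases hcon with ⟨h1, h2⟩ | ⟨h1, h2⟩
        · rw [h1, h2]
        · rw [h1, h2, ← hPs]
      rw [hPeq] at hPz
      rw [hPz] at hqP
      linarith
    have hQz : Q (φ e1.1) (φ e1.2) = 0 := hzero _ _ hPz
    rw [Finset.prod_eq_zero he1 (by rw [modMat_apply_other hne_ab]; exact hQz),
      Finset.prod_eq_zero he1 hQz]
  · push_neg at hab
    refine Finset.prod_congr rfl fun e he => modMat_apply_other ?_
    have := hab e he
    tauto

end ModMat

end Aux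

/-- any minimizer of `I_{W₀}` over block graphons with
`t(H,·) ≥ t` saturates the constraint, dominates `W₀`, and agrees with `W₀`
on every irrelevant block. -/
theorem stmt11 {v m : ℕ} (H : SimpleGraph (Fin v)) [DecidableRel H.Adj]
    (γ : Fin m → ℝ) (hγ : GoodWidths γ)
    (W₀ : ℝ → ℝ → ℝ) (P : Fin m → Fin m → ℝ)
    (hW : IsGraphon W₀) (hWb : IsBlockGraphon γ P W₀)
    (t : ℝ) (ht₁ : homDensity H W₀ ≤ t)
    (ht₂ : t ≤ sSup {s : ℝ | ∃ g, MemWOmega W₀ g ∧ s = homDensity H g})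
    (f : ℝ → ℝ → ℝ) (Q : Fin m → Fin m → ℝ)
    (hfg : IsGraphon f) (hfb : IsBlockGraphon γ Q f) (hft : t ≤ homDensity H f)
    (hmin : ∀ (g : ℝ → ℝ → ℝ) (Q' : Fin m → Fin m → ℝ), IsGraphon g →
      IsBlockGraphon γ Q' g → t ≤ homDensity H g → Ient W₀ f ≤ Ient W₀ g) :
    homDensity H f = t ∧
      (∀ x ∈ Set.Icc (0:ℝ) 1, ∀ y ∈ Set.Icc (0:ℝ) 1, W₀ x y ≤ f x y) ∧
      ∀ a b : Fin m, ¬ RelevantBlock H γ P W₀ a b →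
        ∀ x ∈ blockI γ a, ∀ y ∈ blockI γ b, f x y = W₀ x y := by
  classical
  have hfT : homDensity H f = Tpoly H γ Q := homDensity_block H hγ hfb
  have hWT : homDensity H W₀ = Tpoly H γ P := homDensity_block H hγ hWb
  have hftT : t ≤ Tpoly H γ Q := hfT ▸ hft
  set c : Fin m × Fin m → ℝ≥0∞ := fun p => ENNReal.ofReal (γ p.1 * γ p.2) with hc
  have hc0 : ∀ p : Fin m × Fin m, c p ≠ 0 := by
    intro p
    rw [hc]
    simp only [ne_eq, ENNReal.ofReal_eq_zero, not_le]
    exact mul_pos (hγ.1 p.1) (hγ.1 p.2)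
  -- reduction of the minimality hypothesis to finite sums
  have hminSum : ∀ M : Fin m → Fin m → ℝ, (∀ i j, M i j ∈ Set.Icc (0:ℝ) 1) →
      (∀ i j, M i j = M j i) → t ≤ Tpoly H γ M →
      (∑ p : Fin m × Fin m, c p * relEnt (P p.1 p.2) (Q p.1 p.2))
        ≤ ∑ p : Fin m × Fin m, c p * relEnt (P p.1 p.2) (M p.1 p.2) := by
    intro M h1 h2 h3
    have hbg := blockFn_isBlockGraphon hγ h1 h2
    have hkey := hmin (blockFn γ M) M (blockFn_isGraphon hγ h1 h2) hbg
      (by rw [homDensity_block H hγ hbg]; exact h3)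
    rw [Ient_block hγ hWb hfb, Ient_block hγ hWb hbg] at hkey
    exact (ENNReal.mul_le_mul_iff_right (by norm_num) (by norm_num)).mp hkey
  -- finiteness of the entropy of f
  have htR : t ≤ Tpoly H γ (Rmat P) := le_trans ht₂ (sSup_bound H hγ hW hWb)
  have hRfin : (∑ p : Fin m × Fin m, c p * relEnt (P p.1 p.2) (Rmat P p.1 p.2)) ≠ ⊤ := by
    rw [ENNReal.sum_ne_top]
    intro p _
    refine ENNReal.mul_ne_top ENNReal.ofReal_ne_top ?_
    by_cases h : P p.1 p.2 ∈ Set.Ioo (0:ℝ) 1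
    · rw [Rmat, if_pos h, relEnt_of_mem h]
      exact ENNReal.ofReal_ne_top
    · rw [Rmat, if_neg h, relEnt_self (hWb.1 p.1 p.2)]
      exact ENNReal.zero_ne_top
  have hRIcc : ∀ i j, Rmat P i j ∈ Set.Icc (0:ℝ) 1 := (wmax_isBlockGraphon hγ hWb).1
  have hRsymm : ∀ i j, Rmat P i j = Rmat P j i := (wmax_isBlockGraphon hγ hWb).2.1
  have hSfin : (∑ p : Fin m × Fin m, c p * relEnt (P p.1 p.2) (Q p.1 p.2)) ≠ ⊤ :=
    ne_top_of_le_ne_top hRfin (hminSum (Rmat P) hRIcc hRsymm htR)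
  have hentfin : ∀ i j : Fin m, relEnt (P i j) (Q i j) ≠ ⊤ := by
    intro i j
    intro htop
    have hterm : c (i, j) * relEnt (P i j) (Q i j)
        ≤ ∑ p : Fin m × Fin m, c p * relEnt (P p.1 p.2) (Q p.1 p.2) :=
      Finset.single_le_sum (f := fun p : Fin m × Fin m =>
        c p * relEnt (P p.1 p.2) (Q p.1 p.2)) (fun p _ => zero_le) (Finset.mem_univ (i, j))
    rw [htop, ENNReal.mul_top (hc0 (i, j))] at hterm
    exact hSfin (top_le_iff.mp hterm)
  have hPzero : ∀ i j, P i j = 0 → Q i j = 0 :=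
    fun i j h => (relEnt_ne_top_cases (hentfin i j)).1 h
  have hPone : ∀ i j, P i j = 1 → Q i j = 1 :=
    fun i j h => (relEnt_ne_top_cases (hentfin i j)).2 h
  -- Step 1 : P ≤ Q entrywise
  have hQP : ∀ i j, P i j ≤ Q i j := by
    set M : Fin m → Fin m → ℝ := fun i j => max (Q i j) (P i j) with hM
    have hMIcc : ∀ i j, M i j ∈ Set.Icc (0:ℝ) 1 :=
      fun i j => ⟨le_max_of_le_left (hfb.1 i j).1, max_le (hfb.1 i j).2 (hWb.1 i j).2⟩
    have hMsymm : ∀ i j, M i j = M j i := by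
      intro i j; rw [hM]; simp only; rw [hfb.2.1 i j, hWb.2.1 i j]
    have hTM : t ≤ Tpoly H γ M :=
      le_trans hftT (Tpoly_mono H hγ (fun i j => (hfb.1 i j).1) (fun i j => le_max_left _ _))
    have hsum := hminSum M hMIcc hMsymm hTM
    have heqterm := sum_eq_of_le c
      (fun p => relEnt (P p.1 p.2) (Q p.1 p.2))
      (fun p => relEnt (P p.1 p.2) (M p.1 p.2))
      hc0 (fun p => relEnt_max_le (hWb.1 p.1 p.2) (hfb.1 p.1 p.2)) hSfin hsum
    intro i j
    by_contra hlt
    push_neg at hlt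
    have hp0 : 0 < P i j := lt_of_le_of_lt (hfb.1 i j).1 hlt
    have hp1 : P i j < 1 := by
      rcases lt_or_eq_of_le (hWb.1 i j).2 with h | h
      · exact h
      · rw [hPone i j h] at hlt
        exact absurd (hWb.1 i j).2 (not_le.mpr hlt)
    have hmax : M i j = P i j := max_eq_right hlt.le
    have := heqterm (i, j)
    simp only [hmax] at this
    rw [relEnt_self (hWb.1 i j)] at this
    exact absurd (relEnt_eq_zero_iff ⟨hp0, hp1⟩ (hfb.1 i j) this) (ne_of_lt hlt)
  -- Step 2 : the constraint is saturated
  have hconc1 : Tpoly H γ Q = t := by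
    by_contra hne
    have hgt : t < Tpoly H γ Q := lt_of_le_of_ne hftT (Ne.symm hne)
    by_cases hQeqP : ∀ i j, Q i j = P i j
    · have : Tpoly H γ Q = Tpoly H γ P := by
        congr 1
        funext i j
        exact hQeqP i j
      rw [this] at hgt
      rw [hWT] at ht₁
      exact absurd ht₁ (not_le.mpr hgt)
    · push_neg at hQeqP
      obtain ⟨a, b, hne'⟩ := hQeqP
      have hPltQ : P a b < Q a b := lt_of_le_of_ne (hQP a b) (Ne.symm hne')
      have hPab_pos : 0 < P a b := by
        rcases lt_or_eq_of_le (hWb.1 a b).1 with h | h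
        · exact h
        · rw [hPzero a b h.symm] at hPltQ
          rw [← h] at hPltQ
          exact absurd hPltQ (lt_irrefl _)
      have hPab_lt1 : P a b < 1 := lt_of_lt_of_le hPltQ (hfb.1 a b).2
      have hcont : ContinuousAt (fun x : ℝ => Tpoly H γ (modMat Q a b x)) (Q a b) :=
        (continuous_Tpoly_modMat H γ Q a b).continuousAt
      have hself : Tpoly H γ (modMat Q a b (Q a b)) = Tpoly H γ Q := by
        rw [modMat_self hfb.2.1]
      have hev : ∀ᶠ x in nhds (Q a b), t < Tpoly H γ (modMat Q a b x) := by
        have h1 : t < Tpoly H γ (modMat Q a b (Q a b)) := by rw [hself]; exact hgt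
        exact hcont.eventually (eventually_gt_nhds h1)
      rw [Metric.eventually_nhds_iff] at hev
      obtain ⟨ε, hε, hball⟩ := hev
      set q := max ((P a b + Q a b) / 2) (Q a b - ε / 2) with hqdef
      have hq1 : P a b < q := lt_of_lt_of_le (by linarith) (le_max_left _ _)
      have hq2 : q < Q a b := max_lt (by linarith) (by linarith)
      have hq0 : 0 ≤ q := le_trans (hWb.1 a b).1 hq1.le
      have hq3 : q ≤ 1 := le_trans hq2.le (hfb.1 a b).2
      have hdist : dist q (Q a b) < ε := by
        rw [Real.dist_eq, abs_lt]
        constructor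
        · have := le_max_right ((P a b + Q a b) / 2) (Q a b - ε / 2)
          linarith
        · linarith
      have htq : t < Tpoly H γ (modMat Q a b q) := hball hdist
      have hsum := hminSum (modMat Q a b q) (modMat_mem_Icc hfb.1 ⟨hq0, hq3⟩)
        (modMat_symm hfb.2.1 a b q) htq.le
      have hble : ∀ p : Fin m × Fin m,
          relEnt (P p.1 p.2) (modMat Q a b q p.1 p.2) ≤ relEnt (P p.1 p.2) (Q p.1 p.2) := by
        intro p
        by_cases h : (p.1 = a ∧ p.2 = b) ∨ (p.1 = b ∧ p.2 = a)
        · have hPp : P p.1 p.2 = P a b := by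
            rcases h with ⟨h1, h2⟩ | ⟨h1, h2⟩
            · rw [h1, h2]
            · rw [h1, h2, ← hWb.2.1]
          have hQp : Q p.1 p.2 = Q a b := by
            rcases h with ⟨h1, h2⟩ | ⟨h1, h2⟩
            · rw [h1, h2]
            · rw [h1, h2, ← hfb.2.1]
          rw [modMat_apply_ab h, hPp, hQp]
          exact (relEnt_lt ⟨hPab_pos, hPab_lt1⟩ hq1.le hq2 (hfb.1 a b).2).le
        · rw [modMat_apply_other h]
      have heqterm := sum_eq_of_le c
        (fun p => relEnt (P p.1 p.2) (Q p.1 p.2))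
        (fun p => relEnt (P p.1 p.2) (modMat Q a b q p.1 p.2))
        hc0 hble hSfin hsum
      have hab := heqterm (a, b)
      simp only [modMat_apply_ab (Or.inl ⟨rfl, rfl⟩)] at hab
      exact absurd hab
        (ne_of_gt (relEnt_lt ⟨hPab_pos, hPab_lt1⟩ hq1.le hq2 (hfb.1 a b).2))
  refine ⟨by rw [hfT, hconc1], ?_, ?_⟩
  · -- Step 1 restated pointwise
    intro x hx y hy
    obtain ⟨i, hi⟩ := blockI_cover hγ hx
    obtain ⟨j, hj⟩ := blockI_cover hγ hy
    rw [hWb.2.2 i j x hi y hj, hfb.2.2 i j x hi y hj]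
    exact hQP i j
  · -- Step 3 : irrelevant blocks
    intro a b hirr x hx y hy
    rw [hfb.2.2 a b x hx y hy, hWb.2.2 a b x hx y hy]
    rcases lt_or_eq_of_le (hWb.1 a b).1 with hPpos | hP0
    swap
    · rw [hPzero a b hP0.symm, ← hP0]
    rcases lt_or_eq_of_le (hQP a b) with hPQ | hPQ
    swap
    · exact hPQ.symm
    exfalso
    rw [RelevantBlock] at hirr
    push_neg at hirr
    obtain ⟨q, hq0, hqlt, g, hg, hgb, hge⟩ := hirr hPpos
    have hgT : homDensity H g = Tpoly H γ (modMat P a b q) := homDensity_block H hγ hgb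
    have hTeqP : Tpoly H γ (modMat P a b q) = Tpoly H γ P := by
      refine le_antisymm ?_ ?_
      · exact Tpoly_mono H hγ (modMat_nonneg (fun i j => (hWb.1 i j).1) hq0)
          (modMat_le hWb.2.1 hqlt.le)
      · rw [← hgT, ← hWT]
        exact hge
    have hQab_pos : 0 < Q a b := lt_trans hPpos hPQ
    have hTeq := Tpoly_modMat_eq H hγ hWb.1 hWb.2.1 hq0 hqlt hTeqP hPzero hQab_pos
    have hPab_lt1 : P a b < 1 := lt_of_lt_of_le hPQ (hfb.1 a b).2
    have hsum := hminSum (modMat Q a b (P a b))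
      (modMat_mem_Icc hfb.1 (hWb.1 a b)) (modMat_symm hfb.2.1 a b (P a b))
      (by rw [hTeq]; exact hftT)
    have hble : ∀ p : Fin m × Fin m,
        relEnt (P p.1 p.2) (modMat Q a b (P a b) p.1 p.2)
          ≤ relEnt (P p.1 p.2) (Q p.1 p.2) := by
      intro p
      by_cases h : (p.1 = a ∧ p.2 = b) ∨ (p.1 = b ∧ p.2 = a)
      · have hPp : P p.1 p.2 = P a b := by
          rcases h with ⟨h1, h2⟩ | ⟨h1, h2⟩
          · rw [h1, h2]
          · rw [h1, h2, ← hWb.2.1]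
        rw [modMat_apply_ab h, hPp, relEnt_self (hWb.1 a b)]
        exact zero_le
      · rw [modMat_apply_other h]
    have heqterm := sum_eq_of_le c
      (fun p => relEnt (P p.1 p.2) (Q p.1 p.2))
      (fun p => relEnt (P p.1 p.2) (modMat Q a b (P a b) p.1 p.2))
      hc0 hble hSfin hsum
    have hab := heqterm (a, b)
    simp only [modMat_apply_ab (Or.inl ⟨rfl, rfl⟩)] at hab
    rw [relEnt_self (hWb.1 a b)] at hab
    have := relEnt_eq_zero_iff ⟨hPpos, hPab_lt1⟩ (hfb.1 a b) hab
    exact (ne_of_gt hPQ) this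


end GraphonLDP
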